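/- A regular matroid (one representable by a totally unimodular matrix over the reals) is representable over every field. -/

import Mathlib

open Matrix Submodule Module

lemma linearIndependent_cols_iff_exists_det {K : Type*} [Field K] {m ι : Type*}
    [Fintype m] [Fintype ι] [DecidableEq ι] (B : Matrix m ι K) :
    LinearIndependent K (fun j : ι => fun i : m => B i j) ↔
      ∃ f : ι → m, Function.Injective f ∧ (B.submatrix f id).det ≠ 0 := by
  classical
  constructor
  · intro h
    have hBt : LinearIndependent K Bᵀ := h
    have hrank : Bᵀ.rank = Fintype.card ι := hBt.rank_matrix
    have hrankB : B.rank = Fintype.card ι := by rw [← rank_transpose]; exact hrank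
    have hspan : Submodule.span K (Set.range B) = ⊤ := by
      apply Submodule.eq_top_of_finrank_eq
      change finrank K (span K (Set.range B.row)) = _
      rw [← rank_eq_finrank_span_row, hrankB, Module.finrank_pi]
    obtain ⟨t, htsub, htspan, htli⟩ := exists_linearIndependent K (Set.range B)
    have htfin : t.Finite := (Set.finite_range B).subset htsub
    haveI : Fintype t := htfin.fintype
    have hcard : Fintype.card t = Fintype.card ι := by
      have := finrank_span_set_eq_card htli
      rw [htspan, hspan, finrank_top, Module.finrank_pi, Set.toFinset_card] at this
      omega
    obtain ⟨e⟩ : Nonempty (ι ≃ t) := ⟨(Fintype.equivOfCardEq hcard).symm⟩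
    have hchoice : ∀ v : t, ∃ i : m, B i = (v : ι → K) := fun v => htsub v.2
    choose g hg using hchoice
    refine ⟨g ∘ e, ?_, ?_⟩
    · intro a b hab
      apply e.injective
      apply Subtype.ext
      have : B (g (e a)) = B (g (e b)) := congrArg B hab
      rw [hg (e a), hg (e b)] at this
      exact this
    · have hrows : LinearIndependent K (fun k : ι => B (g (e k))) := by
        have h2 : LinearIndependent K (fun v : t => (v : ι → K)) := htli
        have h3 := h2.comp e e.injective
        have : (fun k : ι => B (g (e k))) = fun k : ι => ((e k : ι → K)) := by
          funext k; exact hg (e k)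
        rw [this]
        exact h3
      have hIsUnit : IsUnit (B.submatrix (g ∘ e) id) :=
        linearIndependent_rows_iff_isUnit.mp hrows
      exact ((isUnit_iff_isUnit_det _).mp hIsUnit).ne_zero
  · rintro ⟨f, hf, hdet⟩
    have hcols : LinearIndependent K (fun j : ι => fun k : ι => B (f k) j) := by
      have := (linearIndependent_cols_iff_isUnit (A := B.submatrix f id)).mpr
        ((isUnit_iff_isUnit_det _).mpr (isUnit_iff_ne_zero.mpr hdet))
      exact this
    exact hcols.of_comp (LinearMap.funLeft K K f)

lemma cast_ne_zero_iff_of_sign {K : Type} [Field K] {d : ℤ}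
    (hd : d ∈ Set.range SignType.cast) : ((d : K) ≠ 0 ↔ d ≠ 0) := by
  obtain ⟨sg, rfl⟩ := hd
  cases sg <;> simp

/-- A regular matroid (one representable by a totally unimodular matrix
over the reals, equivalently an integer totally unimodular matrix) is representable
over every field: interpreting the entries `-1, 0, 1` of the totally unimodular matrix
in any field `F` yields a matrix whose linearly independent column sets are exactly
those of the real representation, i.e. a representation of the same matroid over `F`. -/
theorem stmt_7 {m n : Type} [Fintype m] [Fintype n]
    (A : Matrix m n ℤ) (hTU : A.IsTotallyUnimodular) :
    ∀ (F : Type) [Field F], ∀ s : Set n,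
      LinearIndependent F (fun j : s => fun i => ((A i j.1 : ℤ) : F)) ↔
      LinearIndependent ℝ (fun j : s => fun i => ((A i j.1 : ℤ) : ℝ)) := by
  classical
  intro F _ s
  haveI : Fintype s := Set.Finite.fintype s.toFinite
  have key : ∀ (K : Type) [Field K],
      (LinearIndependent K (fun j : s => fun i => ((A i j.1 : ℤ) : K)) ↔
        ∃ f : s → m, Function.Injective f ∧ (A.submatrix f Subtype.val).det ≠ 0) := by
    intro K _
    have hch : LinearIndependent K (fun j : s => fun i => ((A i j.1 : ℤ) : K)) ↔
        ∃ f : s → m, Function.Injective f ∧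
          ((((A.submatrix id Subtype.val).map (Int.cast : ℤ → K)).submatrix f id).det ≠ 0) :=
      linearIndependent_cols_iff_exists_det
        (((A.submatrix id Subtype.val).map (Int.cast : ℤ → K)))
    rw [hch]
    have hdet : ∀ f : s → m,
        ((((A.submatrix id Subtype.val).map (Int.cast : ℤ → K)).submatrix f id).det)
          = ((A.submatrix f Subtype.val).det : K) := by
      intro f
      exact ((Int.castRingHom K).map_det (A.submatrix f Subtype.val)).symm
    constructor
    · rintro ⟨f, hf, h0⟩
      rw [hdet f] at h0
      refine ⟨f, hf, ?_⟩
      exact ((cast_ne_zero_iff_of_sign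
        ((A.isTotallyUnimodular_iff_fintype.mp hTU) s f Subtype.val)).mp h0)
    · rintro ⟨f, hf, h0⟩
      refine ⟨f, hf, ?_⟩
      rw [hdet f]
      exact ((cast_ne_zero_iff_of_sign
        ((A.isTotallyUnimodular_iff_fintype.mp hTU) s f Subtype.val)).mpr h0)
  rw [key F, key ℝ]
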